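/- arXiv:2310.11380 — 2 statements merged into one kernel-verified Lean document; each statement's English description precedes it below -/
import Mathlib

section
/- For the truncated-Gaussian smoothed function c^β(x) = E_u[c(x+βu)] with u ~ TN(0, I, (b_ℓ-x)/β, (b_u-x)/β), the partial derivative satisfies ∂c^β/∂x_j (x) = E_u[ ((u_j - μ_j)/β) c(x + βu) ], where μ_j = (φ((b_{ℓ,j}-x_j)/β) - φ((b_{u,j}-x_j)/β)) / (Φ((b_{u,j}-x_j)/β) - Φ((b_{ℓ,j}-x_j)/β)) is the mean of the j-th truncated component. -/
open MeasureTheory Real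

/-- Standard normal probability density function. -/
noncomputable def stdNormalPDF (t : ℝ) : ℝ :=
  (Real.sqrt (2 * Real.pi))⁻¹ * Real.exp (-(t ^ 2) / 2)

/-- Standard normal cumulative distribution function. -/
noncomputable def stdNormalCDF (t : ℝ) : ℝ :=
  ∫ s in Set.Iic t, stdNormalPDF s

/-- Density of a standard Gaussian truncated to `[a, b]`. -/
noncomputable def truncPDF (a b t : ℝ) : ℝ :=
  if t ∈ Set.Icc a b then stdNormalPDF t / (stdNormalCDF b - stdNormalCDF a) else 0

/-- Law of a random vector with independent components, the `i`-th being
a standard Gaussian truncated to `[a i, b i]`. -/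
noncomputable def truncGaussianPi {n : ℕ} (a b : Fin n → ℝ) :
    Measure (Fin n → ℝ) :=
  volume.withDensity fun u => ENNReal.ofReal (∏ i, truncPDF (a i) (b i) (u i))

/-- Euclidean norm on `Fin n → ℝ`. -/
noncomputable def euclNorm {n : ℕ} (x : Fin n → ℝ) : ℝ :=
  Real.sqrt (∑ i, (x i) ^ 2)

/-- Mean of the `j`-th component of the truncated Gaussian vector
`TN(0, I, (bℓ-x)/β, (bu-x)/β)`. -/
noncomputable def truncMean (a b : ℝ) : ℝ :=
  (stdNormalPDF a - stdNormalPDF b) / (stdNormalCDF b - stdNormalCDF a)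

/-!
The substitution `v = y + β • u` turns the smoothed function into
`y ↦ ∫ v in [bl, bu], c v * K y v`, where `K y` is the density of `y + β • u`: a product of
rescaled normal densities, each divided by a normalizer that depends smoothly on `y`.
Only the kernel depends on `y`, and it is jointly `C¹`, so its derivative is bounded on
compact sets and dominated convergence against `|c|` allows differentiation under the
integral sign. The logarithmic derivative of `K` in `y j` is `((v j - y j) / β - μ j) / β`;
substituting back `u = β⁻¹ • (v - y)` gives the formula.
-/

open Filter

lemma prod_indicator_Icc_apply {ι α M : Type*} [Fintype ι] [Preorder α] [CommMonoidWithZero M]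
    (a b : ι → α) (g : ι → α → M) (w : ι → α) :
    ∏ i, (Set.Icc (a i) (b i)).indicator (g i) (w i)
      = (Set.Icc a b).indicator (fun w => ∏ i, g i (w i)) w := by
  rw [← Set.pi_univ_Icc]
  by_cases hw : w ∈ Set.univ.pi fun i => Set.Icc (a i) (b i)
  · rw [Set.indicator_of_mem hw]
    exact Finset.prod_congr rfl fun i _ => Set.indicator_of_mem (hw i (Set.mem_univ i)) _
  · rw [Set.indicator_of_notMem hw]
    obtain ⟨i, hi⟩ := by simpa only [Set.mem_univ_pi, not_forall] using hw
    exact Finset.prod_eq_zero (Finset.mem_univ i) (Set.indicator_of_notMem hi _)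

lemma apply_mem_Ioo_of_mem_interior_Icc {ι : Type*} [Finite ι] {a b x : ι → ℝ}
    (hx : x ∈ interior (Set.Icc a b)) (i : ι) : x i ∈ Set.Ioo (a i) (b i) := by
  rw [← Set.pi_univ_Icc, interior_pi_set Set.finite_univ] at hx
  simpa only [interior_Icc] using hx i (Set.mem_univ i)

lemma integral_comp_add_smul {E F : Type*} [NormedAddCommGroup E] [NormedSpace ℝ E]
    [MeasurableSpace E] [BorelSpace E] [FiniteDimensional ℝ E] (μ : Measure E)
    [μ.IsAddHaarMeasure] [NormedAddCommGroup F] [NormedSpace ℝ F] (f : E → F) (y : E) (β : ℝ) :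
    ∫ u, f (y + β • u) ∂μ = |(β ^ Module.finrank ℝ E)⁻¹| • ∫ v, f v ∂μ := by
  rw [Measure.integral_comp_smul μ (fun v => f (y + v)), integral_add_left_eq_self]

lemma hasDerivAt_sub_div (r β s : ℝ) : HasDerivAt (fun s => (r - s) / β) (-1 / β) s :=
  ((hasDerivAt_id' s).const_sub r).div_const β

theorem hasFDerivAt_prod_of_hasDerivAt_mul {ι : Type*} [Fintype ι] {f : ι → ℝ → ℝ}
    {d : ι → ℝ} {y : ι → ℝ} (hf : ∀ i, HasDerivAt (f i) (f i (y i) * d i) (y i)) :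
    HasFDerivAt (fun y : ι → ℝ => ∏ i, f i (y i))
      ((∏ i, f i (y i)) • ∑ i, d i • (ContinuousLinearMap.proj i : (ι → ℝ) →L[ℝ] ℝ)) y := by
  classical
  refine (HasFDerivAt.finsetProd (u := Finset.univ) fun i _ =>
    (hf i).comp_hasFDerivAt y (hasFDerivAt_apply i y)).congr_fderiv ?_
  ext h
  simp only [sum_apply, smul_apply, smul_eq_mul, Finset.mul_sum]
  refine Finset.sum_congr rfl fun i _ => ?_
  rw [← Finset.mul_prod_erase _ _ (Finset.mem_univ i)]
  simp only [Function.comp_apply, ContinuousLinearMap.proj_apply]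
  ring

lemma Continuous.uncurry_comp_apply {ι X Y Z : Type*} [TopologicalSpace X] [TopologicalSpace Y]
    [TopologicalSpace Z] {f : X → Y → Z} (hf : Continuous (Function.uncurry f)) (i : ι) :
    Continuous fun p : (ι → X) × (ι → Y) => f (p.1 i) (p.2 i) :=
  hf.comp (f := fun p : (ι → X) × (ι → Y) => (p.1 i, p.2 i)) (by fun_prop)

section ParametricIntegral

variable {E V : Type*} [NormedAddCommGroup E] [NormedSpace ℝ E] [FiniteDimensional ℝ E]
  [TopologicalSpace V] [T2Space V] [MeasurableSpace V] [OpensMeasurableSpace V]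
  {μ : Measure V} {s : Set V} {c : V → ℝ} {K : E → V → ℝ} {K' : E → V → E →L[ℝ] ℝ}

theorem hasFDerivAt_setIntegral_mul_of_continuous (hs : IsCompact s) (hc : IntegrableOn c s μ)
    (hK : Continuous (Function.uncurry K)) (hK' : Continuous (Function.uncurry K'))
    (hderiv : ∀ y v, HasFDerivAt (K · v) (K' y v) y) (x : E) :
    HasFDerivAt (fun y => ∫ v in s, c v * K y v ∂μ) (∫ v in s, c v • K' x v ∂μ) x := by
  obtain ⟨M, hM⟩ := ((isCompact_closedBall x 1).prod hs).exists_bound_of_continuousOn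
    hK'.continuousOn
  have hKy (y : E) : IntegrableOn (fun v => c v * K y v) s μ :=
    hc.mul_continuousOn (hK.comp (Continuous.prodMk_right y)).continuousOn hs
  have hK'x : IntegrableOn (fun v => c v • K' x v) s μ :=
    hc.smul_continuousOn (hK'.comp (Continuous.prodMk_right x)).continuousOn hs
  refine hasFDerivAt_integral_of_dominated_of_fderiv_le (Metric.ball_mem_nhds x one_pos)
    (bound := fun v => M * ‖c v‖) (Eventually.of_forall fun y => (hKy y).aestronglyMeasurable)
    (hKy x) hK'x.aestronglyMeasurable ?_ (hc.norm.const_mul M)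
    (Eventually.of_forall fun v y _ => (hderiv y v).const_mul (c v))
  filter_upwards [ae_restrict_mem hs.measurableSet] with v hv y hy
  rw [norm_smul, mul_comm]
  exact mul_le_mul_of_nonneg_right (hM (y, v) ⟨Metric.ball_subset_closedBall hy, hv⟩)
    (norm_nonneg _)

theorem fderiv_setIntegral_mul_apply_of_continuous (hs : IsCompact s) (hc : IntegrableOn c s μ)
    (hK : Continuous (Function.uncurry K)) (hK' : Continuous (Function.uncurry K'))
    (hderiv : ∀ y v, HasFDerivAt (K · v) (K' y v) y) (x h : E) :
    fderiv ℝ (fun y => ∫ v in s, c v * K y v ∂μ) x h = ∫ v in s, c v * K' x v h ∂μ := by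
  have hK'x : IntegrableOn (fun v => c v • K' x v) s μ :=
    hc.smul_continuousOn (hK'.comp (Continuous.prodMk_right x)).continuousOn hs
  rw [(hasFDerivAt_setIntegral_mul_of_continuous hs hc hK hK' hderiv x).fderiv,
    ContinuousLinearMap.integral_apply hK'x]
  rfl

end ParametricIntegral

lemma stdNormalPDF_eq_gaussianPDFReal : stdNormalPDF = ProbabilityTheory.gaussianPDFReal 0 1 := by
  ext t
  simp [stdNormalPDF, ProbabilityTheory.gaussianPDFReal]

lemma stdNormalPDF_pos (t : ℝ) : 0 < stdNormalPDF t := by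
  unfold stdNormalPDF
  positivity

lemma continuous_stdNormalPDF : Continuous stdNormalPDF := by
  unfold stdNormalPDF
  fun_prop

lemma integrable_stdNormalPDF : Integrable stdNormalPDF :=
  stdNormalPDF_eq_gaussianPDFReal ▸ ProbabilityTheory.integrable_gaussianPDFReal 0 1

lemma hasDerivAt_stdNormalPDF (t : ℝ) :
    HasDerivAt stdNormalPDF (-t * stdNormalPDF t) t := by
  have h := (((hasDerivAt_pow 2 t).neg.div_const 2).exp).const_mul (√(2 * π))⁻¹
  exact h.congr_deriv (by simp only [stdNormalPDF, Pi.neg_apply]; ring)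

lemma hasDerivAt_stdNormalCDF (t : ℝ) : HasDerivAt stdNormalCDF (stdNormalPDF t) t := by
  have hCDF : (fun s => stdNormalCDF 0 + ∫ u in (0 : ℝ)..s, stdNormalPDF u) = stdNormalCDF := by
    ext s
    rw [← intervalIntegral.integral_Iic_sub_Iic integrable_stdNormalPDF.integrableOn
      integrable_stdNormalPDF.integrableOn]
    unfold stdNormalCDF
    ring
  rw [← hCDF]
  exact (intervalIntegral.integral_hasDerivAt_right integrable_stdNormalPDF.intervalIntegrable
    (continuous_stdNormalPDF.stronglyMeasurableAtFilter _ _)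
    continuous_stdNormalPDF.continuousAt).const_add _

lemma continuous_stdNormalCDF : Continuous stdNormalCDF :=
  continuous_iff_continuousAt.2 fun t => (hasDerivAt_stdNormalCDF t).continuousAt

lemma strictMono_stdNormalCDF : StrictMono stdNormalCDF :=
  strictMono_of_hasDerivAt_pos hasDerivAt_stdNormalCDF stdNormalPDF_pos

lemma truncPDF_nonneg (a b t : ℝ) : 0 ≤ truncPDF a b t := by
  unfold truncPDF
  split_ifs with ht
  · exact div_nonneg (stdNormalPDF_pos t).le
      (sub_nonneg.2 (strictMono_stdNormalCDF.monotone (ht.1.trans ht.2)))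
  · exact le_rfl

lemma measurable_truncPDF (a b : ℝ) : Measurable (truncPDF a b) :=
  Measurable.ite measurableSet_Icc (continuous_stdNormalPDF.measurable.div_const _)
    measurable_const

lemma integral_truncGaussianPi {n : ℕ} {E : Type*} [NormedAddCommGroup E] [NormedSpace ℝ E]
    (a b : Fin n → ℝ) (f : (Fin n → ℝ) → E) :
    ∫ u, f u ∂truncGaussianPi a b = ∫ u, (∏ i, truncPDF (a i) (b i) (u i)) • f u := by
  have hmeas : Measurable fun u : Fin n → ℝ => ∏ i, truncPDF (a i) (b i) (u i) :=
    Finset.measurable_prod _ fun i _ => (measurable_truncPDF _ _).comp (measurable_pi_apply i)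
  rw [truncGaussianPi, integral_withDensity_eq_integral_toReal_smul hmeas.ennreal_ofReal
    (Eventually.of_forall fun _ => ENNReal.ofReal_lt_top)]
  simp_rw [ENNReal.toReal_ofReal (Finset.prod_nonneg fun i _ => truncPDF_nonneg _ _ _)]

noncomputable def truncNormalizer (β p q s : ℝ) : ℝ :=
  stdNormalCDF ((q - s) / β) - stdNormalCDF ((p - s) / β)

/-- Off `[p, q]` this is not the density of `s + β • TN(0, 1, (p - s) / β, (q - s) / β)`
(which vanishes there) but its smooth extension, so that it can be differentiated in `s` for
every `t`. -/
noncomputable def truncKernel (β p q s t : ℝ) : ℝ :=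
  stdNormalPDF ((t - s) / β) / (β * truncNormalizer β p q s)

noncomputable def truncScore (β p q s t : ℝ) : ℝ :=
  ((t - s) / β - truncMean ((p - s) / β) ((q - s) / β)) / β

noncomputable def truncKernelPi {n : ℕ} (β : ℝ) (bl bu y v : Fin n → ℝ) : ℝ :=
  ∏ i, truncKernel β (bl i) (bu i) (y i) (v i)

lemma truncPDF_eq_indicator_truncKernel {β : ℝ} (hβ : 0 < β) (p q s u : ℝ) :
    truncPDF ((p - s) / β) ((q - s) / β) u
      = β * (Set.Icc p q).indicator (truncKernel β p q s) (s + β * u) := by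
  have hmem : u ∈ Set.Icc ((p - s) / β) ((q - s) / β) ↔ s + β * u ∈ Set.Icc p q := by
    simp only [Set.mem_Icc, div_le_iff₀ hβ, le_div_iff₀ hβ]
    constructor <;> rintro ⟨h1, h2⟩ <;> constructor <;> linarith
  unfold truncPDF truncKernel truncNormalizer
  rw [Set.indicator_apply, if_congr hmem rfl rfl]
  split_ifs
  · rw [show (s + β * u - s) / β = u by rw [add_sub_cancel_left, mul_div_cancel_left₀ _ hβ.ne']]
    field_simp
  · simp

lemma prod_truncPDF_eq_indicator_truncKernelPi {n : ℕ} {β : ℝ} (hβ : 0 < β)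
    (bl bu y u : Fin n → ℝ) :
    ∏ i, truncPDF ((bl i - y i) / β) ((bu i - y i) / β) (u i)
      = β ^ n * (Set.Icc bl bu).indicator (truncKernelPi β bl bu y) (y + β • u) := by
  simp_rw [truncPDF_eq_indicator_truncKernel hβ, Finset.prod_mul_distrib, Finset.prod_const,
    Finset.card_univ, Fintype.card_fin]
  congr 1
  exact prod_indicator_Icc_apply bl bu (fun i => truncKernel β (bl i) (bu i) (y i)) (y + β • u)

lemma integral_truncGaussianPi_eq_setIntegral {n : ℕ} {β : ℝ} (hβ : 0 < β)
    (bl bu y : Fin n → ℝ) (f : (Fin n → ℝ) → ℝ) :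
    ∫ u, f u ∂truncGaussianPi (fun i => (bl i - y i) / β) (fun i => (bu i - y i) / β)
      = ∫ v in Set.Icc bl bu, f (β⁻¹ • (v - y)) * truncKernelPi β bl bu y v := by
  set G : (Fin n → ℝ) → ℝ := fun v => β ^ n *
    (Set.Icc bl bu).indicator (fun v => f (β⁻¹ • (v - y)) * truncKernelPi β bl bu y v) v
  calc _ = ∫ u, G (y + β • u) := by
        rw [integral_truncGaussianPi]
        congr with u
        simp only [G]
        rw [prod_truncPDF_eq_indicator_truncKernelPi hβ, smul_eq_mul, Set.indicator_mul_right,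
          add_sub_cancel_left, inv_smul_smul₀ hβ.ne']
        ring
    _ = _ := by
        rw [integral_comp_add_smul, Module.finrank_fin_fun, integral_const_mul,
          integral_indicator measurableSet_Icc, smul_eq_mul, ← mul_assoc,
          abs_of_pos (by positivity), inv_mul_cancel₀ (by positivity), one_mul]

lemma truncNormalizer_pos {β p q : ℝ} (hβ : 0 < β) (hpq : p < q) (s : ℝ) :
    0 < truncNormalizer β p q s :=
  sub_pos.2 (strictMono_stdNormalCDF (by gcongr))

lemma hasDerivAt_truncNormalizer (β p q s : ℝ) :
    HasDerivAt (truncNormalizer β p q)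
      ((stdNormalPDF ((p - s) / β) - stdNormalPDF ((q - s) / β)) / β) s := by
  have hq := (hasDerivAt_stdNormalCDF _).comp s (hasDerivAt_sub_div q β s)
  have hp := (hasDerivAt_stdNormalCDF _).comp s (hasDerivAt_sub_div p β s)
  exact (hq.sub hp).congr_deriv (by ring)

lemma truncMean_div_eq (β p q s : ℝ) :
    truncMean ((p - s) / β) ((q - s) / β)
      = (stdNormalPDF ((p - s) / β) - stdNormalPDF ((q - s) / β)) / truncNormalizer β p q s :=
  rfl

lemma hasDerivAt_truncKernel {β p q : ℝ} (hβ : 0 < β) (hpq : p < q) (s t : ℝ) :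
    HasDerivAt (truncKernel β p q · t) (truncKernel β p q s t * truncScore β p q s t) s := by
  have hφ := (hasDerivAt_stdNormalPDF _).comp s (hasDerivAt_sub_div t β s)
  have hZ := (hasDerivAt_truncNormalizer β p q s).const_mul β
  have hZ0 := (truncNormalizer_pos hβ hpq s).ne'
  refine (hφ.div hZ (mul_ne_zero hβ.ne' hZ0)).congr_deriv ?_
  rw [truncKernel, truncScore, truncMean_div_eq, Function.comp_apply]
  field_simp

lemma continuous_truncNormalizer (β p q : ℝ) : Continuous (truncNormalizer β p q) := by
  have := continuous_stdNormalCDF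
  unfold truncNormalizer
  fun_prop

lemma continuous_truncKernel {β p q : ℝ} (hβ : 0 < β) (hpq : p < q) :
    Continuous (Function.uncurry (truncKernel β p q)) := by
  have := continuous_stdNormalPDF
  have := continuous_truncNormalizer β p q
  exact Continuous.div (by fun_prop) (by fun_prop)
    fun st => (mul_pos hβ (truncNormalizer_pos hβ hpq st.1)).ne'

lemma continuous_truncScore {β p q : ℝ} (hβ : 0 < β) (hpq : p < q) :
    Continuous (Function.uncurry (truncScore β p q)) := by
  have hmean : Continuous fun s => truncMean ((p - s) / β) ((q - s) / β) := by
    simp_rw [truncMean_div_eq]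
    have := continuous_stdNormalPDF
    exact Continuous.div (by fun_prop) (continuous_truncNormalizer β p q)
      fun s => (truncNormalizer_pos hβ hpq s).ne'
  exact (((continuous_snd.sub continuous_fst).div_const β).sub
    (hmean.comp continuous_fst)).div_const β

noncomputable def truncKernelPiFDeriv {n : ℕ} (β : ℝ) (bl bu y v : Fin n → ℝ) :
    (Fin n → ℝ) →L[ℝ] ℝ :=
  truncKernelPi β bl bu y v •
    ∑ i, truncScore β (bl i) (bu i) (y i) (v i) • ContinuousLinearMap.proj i

section KernelPi

variable {n : ℕ} {β : ℝ} {bl bu : Fin n → ℝ}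

lemma hasFDerivAt_truncKernelPi (hβ : 0 < β) (hlu : ∀ i, bl i < bu i) (y v : Fin n → ℝ) :
    HasFDerivAt (truncKernelPi β bl bu · v) (truncKernelPiFDeriv β bl bu y v) y :=
  hasFDerivAt_prod_of_hasDerivAt_mul fun i => hasDerivAt_truncKernel hβ (hlu i) (y i) (v i)

lemma continuous_truncKernelPi (hβ : 0 < β) (hlu : ∀ i, bl i < bu i) :
    Continuous (Function.uncurry (truncKernelPi β bl bu)) :=
  continuous_finsetProd Finset.univ fun i _ =>
    (continuous_truncKernel hβ (hlu i)).uncurry_comp_apply i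

lemma continuous_truncKernelPiFDeriv (hβ : 0 < β) (hlu : ∀ i, bl i < bu i) :
    Continuous (Function.uncurry (truncKernelPiFDeriv β bl bu)) :=
  (continuous_truncKernelPi hβ hlu).smul <| continuous_finsetSum _ fun i _ =>
    ((continuous_truncScore hβ (hlu i)).uncurry_comp_apply i).smul continuous_const

lemma truncKernelPiFDeriv_apply_single (y v : Fin n → ℝ) (j : Fin n) :
    truncKernelPiFDeriv β bl bu y v (Pi.single j 1)
      = truncKernelPi β bl bu y v * truncScore β (bl j) (bu j) (y j) (v j) := by
  simp [truncKernelPiFDeriv, Pi.single_apply]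

end KernelPi

/-- For the truncated-Gaussian smoothed function
`c^β(x) = E_u[c(x+βu)]` with `u ~ TN(0, I, (bℓ-x)/β, (bu-x)/β)`, the `j`-th partial
derivative at an interior point `x` equals `E_u[((u_j - μ_j)/β) c(x + βu)]`, where
`μ_j` is the mean of the `j`-th truncated component. -/
theorem truncated_gaussian_smoothing_partial_deriv {n : ℕ} (β : ℝ) (hβ : 0 < β)
    (bl bu : Fin n → ℝ) (c : (Fin n → ℝ) → ℝ)
    (hc : IntegrableOn c (Set.Icc bl bu) volume)
    (x : Fin n → ℝ) (hx : x ∈ interior (Set.Icc bl bu)) (j : Fin n) :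
    fderiv ℝ
      (fun y => ∫ u, c (y + β • u)
        ∂(truncGaussianPi (fun i => (bl i - y i) / β) (fun i => (bu i - y i) / β)))
      x (Pi.single j 1)
      = ∫ u, ((u j - truncMean ((bl j - x j) / β) ((bu j - x j) / β)) / β) * c (x + β • u)
          ∂(truncGaussianPi (fun i => (bl i - x i) / β) (fun i => (bu i - x i) / β)) := by
  have hlu (i : Fin n) : bl i < bu i :=
    Set.nonempty_Ioo.1 ⟨x i, apply_mem_Ioo_of_mem_interior_Icc hx i⟩
  have hsmooth : (fun y => ∫ u, c (y + β • u)
        ∂(truncGaussianPi (fun i => (bl i - y i) / β) (fun i => (bu i - y i) / β)))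
      = fun y => ∫ v in Set.Icc bl bu, c v * truncKernelPi β bl bu y v := by
    ext y
    simp only [integral_truncGaussianPi_eq_setIntegral hβ, smul_inv_smul₀ hβ.ne',
      add_sub_cancel]
  rw [hsmooth, fderiv_setIntegral_mul_apply_of_continuous isCompact_Icc hc
    (continuous_truncKernelPi hβ hlu) (continuous_truncKernelPiFDeriv hβ hlu)
    (hasFDerivAt_truncKernelPi hβ hlu), integral_truncGaussianPi_eq_setIntegral hβ]
  refine setIntegral_congr_fun measurableSet_Icc fun v _ => ?_
  simp only [truncKernelPiFDeriv_apply_single, truncScore, Pi.smul_apply, Pi.sub_apply,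
    smul_eq_mul, smul_inv_smul₀ hβ.ne', add_sub_cancel]
  ring
end

section
/- Suppose Problem A: minimize over x ∈ X the quantity CVaR_{α₀}(x) subject to CVaR_{α_j}(x) ≤ 0 for j = 1,…,m, and Problem B: minimize over (x, t) ∈ X × R^{m+1} the quantity V_{α₀}(x, t₀) subject to V_{α_j}(x, t_j) ≤ 0 for j = 1,…,m, where CVaR_{α_j}(x) = min_{t∈R} V_{α_j}(x, t). Then x* solves Problem A if and only if there exists t* ∈ R^{m+1} such that (x*, t*) solves Problem B, and the optimal values coincide. -/
/-- `x` solves Problem A: `x ∈ X`, all CVaR constraints hold, and `x` minimizes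
`CVaR 0` among feasible points. -/
def SolvesA {E : Type*} {m : ℕ} (X : Set E) (CVaR : Fin (m + 1) → E → ℝ) (x : E) : Prop :=
  x ∈ X ∧ (∀ j : Fin (m + 1), j ≠ 0 → CVaR j x ≤ 0) ∧
    ∀ y ∈ X, (∀ j : Fin (m + 1), j ≠ 0 → CVaR j y ≤ 0) → CVaR 0 x ≤ CVaR 0 y

/-- `(x, t)` solves Problem B: `x ∈ X`, all `V` constraints hold, and `(x, t)`
minimizes `V 0 · (· 0)` among feasible pairs. -/
def SolvesB {E : Type*} {m : ℕ} (X : Set E) (V : Fin (m + 1) → E → ℝ → ℝ)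
    (x : E) (t : Fin (m + 1) → ℝ) : Prop :=
  x ∈ X ∧ (∀ j : Fin (m + 1), j ≠ 0 → V j x (t j) ≤ 0) ∧
    ∀ y ∈ X, ∀ s : Fin (m + 1) → ℝ,
      (∀ j : Fin (m + 1), j ≠ 0 → V j y (s j) ≤ 0) → V 0 x (t 0) ≤ V 0 y (s 0)

/-- with `CVaR j x = min_t V j x t` (the minimum being attained), and assuming
both solution sets are nonempty, `x*` solves Problem A iff there is `t*` such that
`(x*, t*)` solves Problem B, and the optimal values coincide. -/
theorem cvar_problem_equivalence {E : Type*} {m : ℕ} (X : Set E)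
    (V : Fin (m + 1) → E → ℝ → ℝ) (CVaR : Fin (m + 1) → E → ℝ)
    (hmin : ∀ (j : Fin (m + 1)) (x : E),
      ∃ t : ℝ, V j x t = CVaR j x ∧ ∀ s : ℝ, CVaR j x ≤ V j x s)
    (hA : ∃ x : E, SolvesA X CVaR x)
    (hB : ∃ (x : E) (t : Fin (m + 1) → ℝ), SolvesB X V x t) :
    ∀ xs : E, SolvesA X CVaR xs ↔
      ∃ ts : Fin (m + 1) → ℝ, SolvesB X V xs ts ∧ V 0 xs (ts 0) = CVaR 0 xs := by
  intro xs
  constructor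
  · rintro ⟨hxX, hfeas, hopt⟩
    choose t ht hts using fun j => hmin j xs
    refine ⟨t, ⟨hxX, ?_, ?_⟩, ht 0⟩
    · intro j hj; rw [ht j]; exact hfeas j hj
    · intro y hy s hs
      rw [ht 0]
      calc CVaR 0 xs ≤ CVaR 0 y := hopt y hy (fun j hj => le_trans ((hmin j y).choose_spec.2 (s j)) (hs j hj))
        _ ≤ V 0 y (s 0) := (hmin 0 y).choose_spec.2 (s 0)
  · rintro ⟨ts, ⟨hxX, hfeas, hopt⟩, hval⟩
    refine ⟨hxX, ?_, ?_⟩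
    · intro j hj
      exact le_trans ((hmin j xs).choose_spec.2 (ts j)) (hfeas j hj)
    · intro y hy hyf
      choose s hs hss using fun j => hmin j y
      rw [← hval, ← hs 0]
      exact hopt y hy s (fun j hj => by rw [hs j]; exact hyf j hj)
end
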